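/- Let X be a subset of ℝ^N and let E be a vector sublattice of the real-valued functions on X containing the restrictions to X of the test functions 1, pr_1, …, pr_N, −pr_1, …, −pr_N and Σ_{k=1}^N pr_k². Let (T_n) be a sequence of weakly nonlinear (sublinear and translatable) and monotone operators from E into E, let f ∈ E be bounded, and let x ∈ X be a point at which f is continuous and at which T_n(h)(x) → h(x) for each of the test functions h. Then T_n(f)(x) → f(x). -/

import Mathlib

/-!
Put `p(y) = Σₖ (yₖ - xₖ)²`. Since `p = Σ pr_k² - 2 Σ xₖ pr_k + (Σ xₖ²)·1` is a combination of test
functions vanishing at `x`, sublinearity and monotonicity give `0 ≤ Tₙ p x ≤ (terms tending to 0)`,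
so `Tₙ p x → 0`. For `f` bounded and continuous at `x`, every `ε > 0` admits `C ≥ 0` with
`f x - ε - C p ≤ f ≤ f x + ε + C p`; monotonicity, homogeneity and translatability turn this into
`|Tₙ f x - f x · Tₙ 1 x| ≤ ε Tₙ 1 x + C Tₙ p x`, whose right-hand side tends to `ε`.
-/

open Filter Topology

variable {α : Type*}

structure IsSublinearOn (E : Submodule ℝ (α → ℝ)) (S : (α → ℝ) → α → ℝ) : Prop where
  map_add_le : ∀ f ∈ E, ∀ g ∈ E, S (f + g) ≤ S f + S g
  map_smul_of_nonneg : ∀ c : ℝ, 0 ≤ c → ∀ f ∈ E, S (c • f) = c • S f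

structure IsWeaklyNonlinearOn (E : Submodule ℝ (α → ℝ)) (S : (α → ℝ) → α → ℝ) : Prop
    extends IsSublinearOn E S where
  map_add_smul_one_of_nonneg : ∀ f ∈ E, ∀ c : ℝ, 0 ≤ c → S (f + c • 1) = S f + c • S 1

variable {E : Submodule ℝ (α → ℝ)} {S : (α → ℝ) → α → ℝ}

namespace IsSublinearOn

theorem map_zero (hS : IsSublinearOn E S) : S 0 = 0 := by
  simpa using hS.map_smul_of_nonneg 0 le_rfl 0 E.zero_mem

theorem neg_map_le_map_neg (hS : IsSublinearOn E S) {f : α → ℝ} (hf : f ∈ E) :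
    -S f ≤ S (-f) := by
  have h := hS.map_add_le f hf (-f) (E.neg_mem hf)
  rw [add_neg_cancel, hS.map_zero] at h
  exact neg_le_iff_add_nonneg'.2 h

theorem map_sum_le (hS : IsSublinearOn E S) {ι : Type*} (s : Finset ι) {g : ι → α → ℝ}
    (hg : ∀ i ∈ s, g i ∈ E) : S (∑ i ∈ s, g i) ≤ ∑ i ∈ s, S (g i) := by
  classical
  induction s using Finset.induction_on with
  | empty => simp [hS.map_zero]
  | insert a s ha ih =>
    have hs : ∀ i ∈ s, g i ∈ E := fun i hi => hg i (Finset.mem_insert_of_mem hi)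
    rw [Finset.sum_insert ha, Finset.sum_insert ha]
    exact (hS.map_add_le _ (hg a (Finset.mem_insert_self a s)) _ (E.sum_mem hs)).trans
      (add_le_add le_rfl (ih hs))

end IsSublinearOn

namespace IsWeaklyNonlinearOn

theorem map_add_smul_one (hS : IsWeaklyNonlinearOn E S) (h1 : (1 : α → ℝ) ∈ E)
    {f : α → ℝ} (hf : f ∈ E) (c : ℝ) : S (f + c • 1) = S f + c • S 1 := by
  rcases le_or_gt 0 c with hc | hc
  · exact hS.map_add_smul_one_of_nonneg f hf c hc
  · have h := hS.map_add_smul_one_of_nonneg (f + c • 1) (E.add_mem hf (E.smul_mem c h1)) (-c)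
      (by linarith)
    rw [add_assoc, ← add_smul, add_neg_cancel, zero_smul, add_zero] at h
    rw [h, add_assoc, ← add_smul, neg_add_cancel, zero_smul, add_zero]

theorem abs_map_sub_le (hS : IsWeaklyNonlinearOn E S) (hmono : MonotoneOn S E)
    (h1 : (1 : α → ℝ) ∈ E) {f p : α → ℝ} (hf : f ∈ E) (hp : p ∈ E) {x : α} {ε C : ℝ}
    (hC : 0 ≤ C) (hbound : ∀ y, |f y - f x| ≤ ε + C * p y) (z : α) :
    |S f z - f x * S 1 z| ≤ ε * S 1 z + C * S p z := by
  have hCp : C • p ∈ E := E.smul_mem C hp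
  have hSCp : S (C • p) = C • S p := hS.map_smul_of_nonneg C hC p hp
  have upper : f ≤ C • p + (f x + ε) • 1 := fun y => by
    have := (abs_le.1 (hbound y)).2
    simp only [Pi.add_apply, Pi.smul_apply, smul_eq_mul, Pi.one_apply, mul_one]
    linarith
  have lower : -(C • p) + (f x - ε) • 1 ≤ f := fun y => by
    have := (abs_le.1 (hbound y)).1
    simp only [Pi.add_apply, Pi.neg_apply, Pi.smul_apply, smul_eq_mul, Pi.one_apply, mul_one]
    linarith
  have hup := hmono hf (E.add_mem hCp (E.smul_mem _ h1)) upper z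
  have hlo := hmono (E.add_mem (E.neg_mem hCp) (E.smul_mem _ h1)) hf lower z
  have hneg := hS.neg_map_le_map_neg hCp z
  rw [hS.map_add_smul_one h1 hCp, hSCp] at hup
  rw [hS.map_add_smul_one h1 (E.neg_mem hCp)] at hlo
  rw [hSCp] at hneg
  simp only [Pi.add_apply, Pi.neg_apply, Pi.smul_apply, smul_eq_mul] at hup hlo hneg
  rw [abs_le]
  constructor <;> linarith

end IsWeaklyNonlinearOn

section Sequence

variable {T : ℕ → (α → ℝ) → α → ℝ} {x : α}

theorem tendsto_map_smul_apply (hT : ∀ n, IsSublinearOn E (T n)) {g : α → ℝ} (hg : g ∈ E)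
    (hpos : Tendsto (fun n => T n g x) atTop (𝓝 (g x)))
    (hneg : Tendsto (fun n => T n (-g) x) atTop (𝓝 (-g x))) (c : ℝ) :
    Tendsto (fun n => T n (c • g) x) atTop (𝓝 (c * g x)) := by
  rcases le_or_gt 0 c with hc | hc
  · have h : ∀ n, T n (c • g) x = c * T n g x := fun n => by
      rw [(hT n).map_smul_of_nonneg c hc g hg]; rfl
    simpa only [h] using hpos.const_mul c
  · have h : ∀ n, T n (c • g) x = -c * T n (-g) x := fun n => by
      rw [← neg_smul_neg, (hT n).map_smul_of_nonneg (-c) (by linarith) (-g) (E.neg_mem hg)]; rfl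
    simpa only [h, neg_mul_neg] using hneg.const_mul (-c)

theorem tendsto_map_apply_of_abs_sub_le (hT : ∀ n, IsWeaklyNonlinearOn E (T n))
    (hmono : ∀ n, MonotoneOn (T n) E) (h1 : (1 : α → ℝ) ∈ E) {f p : α → ℝ} (hf : f ∈ E)
    (hp : p ∈ E) (hbound : ∀ ε > 0, ∃ C, 0 ≤ C ∧ ∀ y, |f y - f x| ≤ ε + C * p y)
    (hT1 : Tendsto (fun n => T n 1 x) atTop (𝓝 1))
    (hTp : Tendsto (fun n => T n p x) atTop (𝓝 0)) :
    Tendsto (fun n => T n f x) atTop (𝓝 (f x)) := by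
  rw [Metric.tendsto_nhds]
  intro ε hε
  obtain ⟨C, hC, hCf⟩ := hbound (ε / 2) (half_pos hε)
  have hlim : Tendsto (fun n => ε / 2 * T n 1 x + C * T n p x + |f x| * |T n 1 x - 1|)
      atTop (𝓝 (ε / 2)) := by
    simpa using ((hT1.const_mul (ε / 2)).add (hTp.const_mul C)).add
      ((hT1.sub_const 1).abs.const_mul |f x|)
  filter_upwards [hlim.eventually_lt_const (half_lt_self hε)] with n hn
  have hn' := (hT n).abs_map_sub_le (hmono n) h1 hf hp hC hCf x
  rw [Real.dist_eq]
  calc |T n f x - f x|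
      ≤ |T n f x - f x * T n 1 x| + |f x * T n 1 x - f x| := abs_sub_le _ _ _
    _ = |T n f x - f x * T n 1 x| + |f x| * |T n 1 x - 1| := by rw [← abs_mul, mul_sub, mul_one]
    _ < ε := by linarith

end Sequence

theorem exists_abs_sub_le_add_mul_dist_sq [PseudoMetricSpace α] {f : α → ℝ} {x : α}
    (hfb : ∃ M : ℝ, ∀ y, |f y| ≤ M) (hfc : ContinuousAt f x) {ε : ℝ} (hε : 0 < ε) :
    ∃ C, 0 ≤ C ∧ ∀ y, |f y - f x| ≤ ε + C * dist y x ^ 2 := by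
  obtain ⟨M, hM⟩ := hfb
  obtain ⟨δ, hδ, hδf⟩ := Metric.continuousAt_iff.1 hfc ε hε
  have hM0 : 0 ≤ M := (abs_nonneg _).trans (hM x)
  refine ⟨2 * M / δ ^ 2, by positivity, fun y => ?_⟩
  rcases lt_or_ge (dist y x) δ with hy | hy
  · have hnear := hδf hy
    rw [Real.dist_eq] at hnear
    have : 0 ≤ 2 * M / δ ^ 2 * dist y x ^ 2 := by positivity
    linarith
  · have hfar : 2 * M ≤ 2 * M / δ ^ 2 * dist y x ^ 2 := by
      rw [div_mul_eq_mul_div, le_div_iff₀ (by positivity)]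
      gcongr
    linarith [abs_sub (f y) (f x), hM y, hM x]

theorem dist_sq_le_sum_sq_sub {N : ℕ} (y x : Fin N → ℝ) :
    dist y x ^ 2 ≤ ∑ k, (y k - x k) ^ 2 := by
  have h : dist y x ≤ √(∑ k, (y k - x k) ^ 2) :=
    (dist_pi_le_iff (Real.sqrt_nonneg _)).2 fun k => by
      rw [Real.dist_eq]
      exact Real.abs_le_sqrt (Finset.single_le_sum (f := fun k => (y k - x k) ^ 2)
        (fun i _ => sq_nonneg _) (Finset.mem_univ k))
  calc dist y x ^ 2 ≤ √(∑ k, (y k - x k) ^ 2) ^ 2 := by gcongr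
    _ = ∑ k, (y k - x k) ^ 2 := Real.sq_sqrt (by positivity)

section TestFunctions

variable {N : ℕ} {X : Set (Fin N → ℝ)} {E : Submodule ℝ (X → ℝ)}

theorem sum_sq_sub_eq (x : Fin N → ℝ) :
    (fun y : X => ∑ k, ((y : Fin N → ℝ) k - x k) ^ 2) =
      (fun y : X => ∑ k, ((y : Fin N → ℝ) k) ^ 2) +
        ∑ k, (-2 * x k) • (fun y : X => (y : Fin N → ℝ) k) + (∑ k, x k ^ 2) • 1 := by
  funext y
  simp only [Pi.add_apply, Finset.sum_apply, Pi.smul_apply, smul_eq_mul, Pi.one_apply, mul_one]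
  rw [← Finset.sum_add_distrib, ← Finset.sum_add_distrib]
  exact Finset.sum_congr rfl fun k _ => by ring

theorem sum_sq_sub_mem (h1 : (1 : X → ℝ) ∈ E) (hpr : ∀ k, (fun y : X => (y : Fin N → ℝ) k) ∈ E)
    (hsq : (fun y : X => ∑ k, ((y : Fin N → ℝ) k) ^ 2) ∈ E) (x : Fin N → ℝ) :
    (fun y : X => ∑ k, ((y : Fin N → ℝ) k - x k) ^ 2) ∈ E := by
  rw [sum_sq_sub_eq]
  exact E.add_mem (E.add_mem hsq (E.sum_mem fun k _ => E.smul_mem _ (hpr k))) (E.smul_mem _ h1)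

theorem IsSublinearOn.map_sum_sq_sub_apply_le {S : (X → ℝ) → X → ℝ} (hS : IsSublinearOn E S)
    (h1 : (1 : X → ℝ) ∈ E) (hpr : ∀ k, (fun y : X => (y : Fin N → ℝ) k) ∈ E)
    (hsq : (fun y : X => ∑ k, ((y : Fin N → ℝ) k) ^ 2) ∈ E) (x : Fin N → ℝ) (z : X) :
    S (fun y : X => ∑ k, ((y : Fin N → ℝ) k - x k) ^ 2) z ≤
      S (fun y : X => ∑ k, ((y : Fin N → ℝ) k) ^ 2) z +
        ∑ k, S ((-2 * x k) • fun y : X => (y : Fin N → ℝ) k) z + (∑ k, x k ^ 2) * S 1 z := by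
  have hlin : ∀ k ∈ Finset.univ, (-2 * x k) • (fun y : X => (y : Fin N → ℝ) k) ∈ E :=
    fun k _ => E.smul_mem _ (hpr k)
  have hsum := hS.map_sum_le Finset.univ hlin z
  have hsplit := hS.map_add_le _ (E.add_mem hsq (E.sum_mem hlin)) ((∑ k, x k ^ 2) • 1)
    (E.smul_mem _ h1) z
  have hsplit' := hS.map_add_le _ hsq _ (E.sum_mem hlin) z
  rw [← sum_sq_sub_eq, hS.map_smul_of_nonneg _ (by positivity) 1 h1] at hsplit
  simp only [Pi.add_apply, Pi.smul_apply, Finset.sum_apply, smul_eq_mul] at hsplit hsplit' hsum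
  linarith

theorem tendsto_map_sum_sq_sub_apply {T : ℕ → (X → ℝ) → X → ℝ}
    (hT : ∀ n, IsSublinearOn E (T n)) (hmono : ∀ n, MonotoneOn (T n) E) (h1 : (1 : X → ℝ) ∈ E)
    (hpr : ∀ k, (fun y : X => (y : Fin N → ℝ) k) ∈ E)
    (hsq : (fun y : X => ∑ k, ((y : Fin N → ℝ) k) ^ 2) ∈ E) (x : X)
    (htest1 : Tendsto (fun n => T n 1 x) atTop (𝓝 1))
    (htestpr : ∀ k, Tendsto (fun n => T n (fun y : X => (y : Fin N → ℝ) k) x) atTop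
      (𝓝 ((x : Fin N → ℝ) k)))
    (htestprneg : ∀ k, Tendsto (fun n => T n (-fun y : X => (y : Fin N → ℝ) k) x) atTop
      (𝓝 (-(x : Fin N → ℝ) k)))
    (htestsq : Tendsto (fun n => T n (fun y : X => ∑ k, ((y : Fin N → ℝ) k) ^ 2) x) atTop
      (𝓝 (∑ k, ((x : Fin N → ℝ) k) ^ 2))) :
    Tendsto (fun n => T n (fun y : X => ∑ k, ((y : Fin N → ℝ) k - (x : Fin N → ℝ) k) ^ 2) x)
      atTop (𝓝 0) := by
  set xv : Fin N → ℝ := (x : Fin N → ℝ)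
  have lower : ∀ n, 0 ≤ T n (fun y : X => ∑ k, ((y : Fin N → ℝ) k - xv k) ^ 2) x := fun n => by
    have h := hmono n E.zero_mem (sum_sq_sub_mem h1 hpr hsq xv)
      (fun y => Finset.sum_nonneg fun k _ => sq_nonneg _) x
    rwa [(hT n).map_zero] at h
  have hlim := (htestsq.add (tendsto_finsetSum Finset.univ fun k _ =>
      tendsto_map_smul_apply hT (hpr k) (htestpr k) (htestprneg k) (-2 * xv k))).add
    (htest1.const_mul (∑ k, xv k ^ 2))
  have hzero : ∑ k, xv k ^ 2 + ∑ k, -2 * xv k * xv k + (∑ k, xv k ^ 2) * 1 = 0 := by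
    simp only [mul_assoc, ← sq, ← Finset.mul_sum]
    ring
  exact squeeze_zero lower (fun n => (hT n).map_sum_sq_sub_apply_le h1 hpr hsq xv x)
    (hzero ▸ hlim)

end TestFunctions

theorem korovkin_pointwise_at_continuity_point_general {N : ℕ} (X : Set (Fin N → ℝ))
    (E : Set (X → ℝ))
    -- `E` is a vector sublattice of `𝓕(X)`
    (hEadd : ∀ f ∈ E, ∀ g ∈ E, f + g ∈ E)
    (hEsmul : ∀ (c : ℝ), ∀ f ∈ E, c • f ∈ E)
    -- `E` contains the test functions
    (hone : (fun _ : X => (1 : ℝ)) ∈ E)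
    (hpr : ∀ k : Fin N, (fun x : X => (x : Fin N → ℝ) k) ∈ E)
    (hsq : (fun x : X => ∑ k, ((x : Fin N → ℝ) k) ^ 2) ∈ E)
    -- `(T n)` weakly nonlinear and monotone, from `E` into `E`
    (T : ℕ → (X → ℝ) → (X → ℝ))
    (hsubadd : ∀ n, ∀ f ∈ E, ∀ g ∈ E, T n (f + g) ≤ T n f + T n g)
    (hhom : ∀ n, ∀ (α : ℝ), 0 ≤ α → ∀ f ∈ E, T n (α • f) = α • T n f)
    (hmono : ∀ n, ∀ f ∈ E, ∀ g ∈ E, f ≤ g → T n f ≤ T n g)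
    (htrans : ∀ n, ∀ f ∈ E, ∀ (α : ℝ), 0 ≤ α →
      T n (f + α • (fun _ : X => (1 : ℝ))) = T n f + α • T n (fun _ : X => (1 : ℝ)))
    -- the data: `f ∈ E` bounded and a point `x` of continuity of `f`
    (f : X → ℝ) (hfE : f ∈ E)
    (hfb : ∃ M : ℝ, ∀ y, |f y| ≤ M)
    (x : X) (hfc : ContinuousAt f x)
    -- convergence at `x` on the test functions
    (htest1 : Tendsto (fun n => T n (fun _ => 1) x) atTop (𝓝 1))
    (htestpr : ∀ k : Fin N,
      Tendsto (fun n => T n (fun y : X => (y : Fin N → ℝ) k) x) atTop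
        (𝓝 ((x : Fin N → ℝ) k)))
    (htestprneg : ∀ k : Fin N,
      Tendsto (fun n => T n (fun y : X => -((y : Fin N → ℝ) k)) x) atTop
        (𝓝 (-((x : Fin N → ℝ) k))))
    (htestsq : Tendsto (fun n => T n (fun y : X => ∑ k, ((y : Fin N → ℝ) k) ^ 2) x)
      atTop (𝓝 (∑ k, ((x : Fin N → ℝ) k) ^ 2))) :
    Tendsto (fun n => T n f x) atTop (𝓝 (f x)) := by
  let F : Submodule ℝ (X → ℝ) :=
    { carrier := E
      add_mem' := fun hf hg => hEadd _ hf _ hg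
      zero_mem' := by simpa using hEsmul 0 _ hone
      smul_mem' := hEsmul }
  have hT : ∀ n, IsWeaklyNonlinearOn F (T n) := fun n => ⟨⟨hsubadd n, hhom n⟩, htrans n⟩
  have hTp := tendsto_map_sum_sq_sub_apply (E := F) (fun n => (hT n).toIsSublinearOn) hmono
    hone hpr hsq x htest1 htestpr htestprneg htestsq
  refine tendsto_map_apply_of_abs_sub_le hT hmono hone hfE
    (sum_sq_sub_mem (E := F) hone hpr hsq x) (fun ε hε => ?_) htest1 hTp
  obtain ⟨C, hC, hCf⟩ := exists_abs_sub_le_add_mul_dist_sq hfb hfc hε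
  exact ⟨C, hC, fun y => (hCf y).trans (by gcongr; exact dist_sq_le_sum_sq_sub _ _)⟩

/-- **Remark `rem2`.** Let `X ⊆ ℝ^N` and `E` a vector sublattice of
functions on `X` containing the test functions `1, ±pr_1, …, ±pr_N, Σ pr_k²`.
If `(T n)` is a sequence of weakly nonlinear and monotone operators from `E` into
`E`, `f ∈ E` is bounded, and `x ∈ X` is a point of continuity of `f` at which
`T n h x → h x` for every test function `h`, then `T n f x → f x`. -/
theorem korovkin_pointwise_at_continuity_point {N : ℕ} (X : Set (Fin N → ℝ))
    (E : Set (X → ℝ))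
    -- `E` is a vector sublattice of `𝓕(X)`
    (hEadd : ∀ f ∈ E, ∀ g ∈ E, f + g ∈ E)
    (hEsmul : ∀ (c : ℝ), ∀ f ∈ E, c • f ∈ E)
    (hEsup : ∀ f ∈ E, ∀ g ∈ E, f ⊔ g ∈ E)
    -- `E` contains the test functions
    (hone : (fun _ : X => (1 : ℝ)) ∈ E)
    (hpr : ∀ k : Fin N, (fun x : X => (x : Fin N → ℝ) k) ∈ E)
    (hprneg : ∀ k : Fin N, (fun x : X => -((x : Fin N → ℝ) k)) ∈ E)
    (hsq : (fun x : X => ∑ k, ((x : Fin N → ℝ) k) ^ 2) ∈ E)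
    -- `(T n)` weakly nonlinear and monotone, from `E` into `E`
    (T : ℕ → (X → ℝ) → (X → ℝ))
    (hmap : ∀ n, ∀ f ∈ E, T n f ∈ E)
    (hsubadd : ∀ n, ∀ f ∈ E, ∀ g ∈ E, T n (f + g) ≤ T n f + T n g)
    (hhom : ∀ n, ∀ (α : ℝ), 0 ≤ α → ∀ f ∈ E, T n (α • f) = α • T n f)
    (hmono : ∀ n, ∀ f ∈ E, ∀ g ∈ E, f ≤ g → T n f ≤ T n g)
    (htrans : ∀ n, ∀ f ∈ E, ∀ (α : ℝ), 0 ≤ α →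
      T n (f + α • (fun _ : X => (1 : ℝ))) = T n f + α • T n (fun _ : X => (1 : ℝ)))
    -- the data: `f ∈ E` bounded and a point `x` of continuity of `f`
    (f : X → ℝ) (hfE : f ∈ E)
    (hfb : ∃ M : ℝ, ∀ y, |f y| ≤ M)
    (x : X) (hfc : ContinuousAt f x)
    -- convergence at `x` on the test functions
    (htest1 : Tendsto (fun n => T n (fun _ => 1) x) atTop (𝓝 1))
    (htestpr : ∀ k : Fin N,
      Tendsto (fun n => T n (fun y : X => (y : Fin N → ℝ) k) x) atTop
        (𝓝 ((x : Fin N → ℝ) k)))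
    (htestprneg : ∀ k : Fin N,
      Tendsto (fun n => T n (fun y : X => -((y : Fin N → ℝ) k)) x) atTop
        (𝓝 (-((x : Fin N → ℝ) k))))
    (htestsq : Tendsto (fun n => T n (fun y : X => ∑ k, ((y : Fin N → ℝ) k) ^ 2) x)
      atTop (𝓝 (∑ k, ((x : Fin N → ℝ) k) ^ 2))) :
    Tendsto (fun n => T n f x) atTop (𝓝 (f x)) :=
  korovkin_pointwise_at_continuity_point_general X E hEadd hEsmul hone hpr hsq T hsubadd hhom hmono
    htrans f hfE hfb x hfc htest1 htestpr htestprneg htestsq
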